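/- Fix an integer L ≥ 2, let n = 2^L, let 0 ≤ k ≤ L − 1 and let M_k be the k-th milestone set. Let G be a finite connected simple graph with integer edge weights w : E(G) → ℤ satisfying 1 ≤ w(e) ≤ n for every edge e, and define w'(e) as the least element of M_k that is ≥ w(e). Then every spanning tree of G of minimum total weight with respect to w' has total w-weight at most (1 + 1/2^k) times the total w-weight of a minimum spanning tree of G with respect to w. -/

import Mathlib

/-!
The milestone set `M_j` is a dyadic grid: `x ∈ [1, 2 ^ L]` lies in `M_j` iff `x` is a multiple
of `2 ^ (⌊log₂ x⌋ - j)`. Indeed the successor of `a` in that grid is `a + 2 ^ (⌊log₂ a⌋ - j)`,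
and the midpoints of consecutive grid points are exactly the points added in the next grid.
So rounding `x` up to `M_k` adds less than `2 ^ (⌊log₂ x⌋ - k) ≤ x / 2 ^ k`, i.e. `w' ≤ (1 + 2⁻ᵏ) w`
edgewise, and for a `w'`-minimal tree `T'` and any spanning tree `T`,
`w(T') ≤ w'(T') ≤ w'(T) ≤ (1 + 2⁻ᵏ) w(T)`.
-/

/-- The milestone sets `M_k ⊆ [1, 2 ^ L]`: `M_0 = {2 ^ i : 0 ≤ i ≤ L}`, and `M_{j+1}` is
obtained from `M_j` by adding, for every pair of consecutive elements `a < b` of `M_j`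
with `b − a ≥ 2`, the midpoint `(a + b) / 2` (an integer `c` with `a + b = 2 * c`). -/
def milestones (L : ℕ) : ℕ → Finset ℕ
  | 0 => (Finset.range (L + 1)).image (fun i => 2 ^ i)
  | j + 1 =>
      milestones L j ∪
        (Finset.range (2 ^ L + 1)).filter (fun c =>
          ∃ a ∈ milestones L j, ∃ b ∈ milestones L j,
            a < b ∧ (∀ x ∈ milestones L j, ¬(a < x ∧ x < b)) ∧ 2 ≤ b - a ∧ a + b = 2 * c)

/-- The total weight of (the edges of) a graph `T` on a finite vertex type,
with respect to an edge-weight function `w`. -/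
noncomputable def treeWeight {V : Type*} [Fintype V] {R : Type*} [AddCommMonoid R]
    (T : SimpleGraph V) (w : Sym2 V → R) : R :=
  letI : Fintype T.edgeSet := Fintype.ofFinite _
  ∑ e ∈ T.edgeSet.toFinset, w e

lemma add_le_of_dvd_of_lt {d a y : ℕ} (ha : d ∣ a) (hy : d ∣ y) (hay : a < y) : a + d ≤ y := by
  have := Nat.le_of_dvd (by omega) (Nat.dvd_sub hy ha)
  omega

def gridStep (j x : ℕ) : ℕ := 2 ^ (Nat.log 2 x - j)

def dyadicGrid (L j : ℕ) : Finset ℕ :=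
  (Finset.Icc 1 (2 ^ L)).filter fun x => gridStep j x ∣ x

def roundDown (j x : ℕ) : ℕ := gridStep j x * (x / gridStep j x)

lemma mem_dyadicGrid {L j x : ℕ} :
    x ∈ dyadicGrid L j ↔ 1 ≤ x ∧ x ≤ 2 ^ L ∧ gridStep j x ∣ x := by
  simp [dyadicGrid, and_assoc]

lemma gridStep_pos (j x : ℕ) : 0 < gridStep j x := by
  unfold gridStep; positivity

lemma gridStep_eq_one_of_log_le {j x : ℕ} (h : Nat.log 2 x ≤ j) : gridStep j x = 1 := by
  rw [gridStep, Nat.sub_eq_zero_of_le h, pow_zero]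

lemma gridStep_dvd_pow_log (j x : ℕ) : gridStep j x ∣ 2 ^ Nat.log 2 x :=
  pow_dvd_pow 2 (Nat.sub_le _ _)

lemma gridStep_eq_of_log_eq {j x y : ℕ} (h : Nat.log 2 y = Nat.log 2 x) :
    gridStep j y = gridStep j x := by
  rw [gridStep, gridStep, h]

lemma gridStep_dvd_of_mem_Icc {i j x : ℕ} (h₁ : 2 ^ i ≤ x) (h₂ : x ≤ 2 ^ (i + 1))
    (hd : 2 ^ (i - j) ∣ x) : gridStep j x ∣ x := by
  rcases h₂.lt_or_eq with h₂ | rfl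
  · rwa [gridStep, Nat.log_eq_of_pow_le_of_lt_pow h₁ h₂]
  · rw [gridStep, Nat.log_pow one_lt_two]
    exact pow_dvd_pow 2 (Nat.sub_le _ _)

lemma milestones_zero_eq_dyadicGrid (L : ℕ) : milestones L 0 = dyadicGrid L 0 := by
  ext x
  simp only [milestones, Finset.mem_image, Finset.mem_range, mem_dyadicGrid, gridStep,
    Nat.sub_zero]
  constructor
  · rintro ⟨i, hi, rfl⟩
    rw [Nat.log_pow one_lt_two]
    exact ⟨Nat.one_le_two_pow, Nat.pow_le_pow_right two_pos (by omega), dvd_rfl⟩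
  · rintro ⟨hx₁, hx₂, hd⟩
    have hx : x = 2 ^ Nat.log 2 x := Nat.eq_of_dvd_of_lt_two_mul (by omega) hd
      (by simpa [pow_succ'] using Nat.lt_pow_succ_log_self one_lt_two x)
    refine ⟨Nat.log 2 x, ?_, hx.symm⟩
    rw [hx] at hx₂
    have := (Nat.pow_le_pow_iff_right one_lt_two).1 hx₂
    omega

lemma dyadicGrid_mono (L j : ℕ) : dyadicGrid L j ⊆ dyadicGrid L (j + 1) := by
  intro x hx
  obtain ⟨hx₁, hx₂, hd⟩ := mem_dyadicGrid.1 hx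
  exact mem_dyadicGrid.2 ⟨hx₁, hx₂, (pow_dvd_pow 2 (by omega)).trans hd⟩

lemma add_gridStep_le_pow_succ_log {j a : ℕ} (ha : gridStep j a ∣ a) :
    a + gridStep j a ≤ 2 ^ (Nat.log 2 a + 1) :=
  add_le_of_dvd_of_lt ha (pow_dvd_pow 2 (by omega)) (Nat.lt_pow_succ_log_self one_lt_two a)

lemma add_gridStep_mem {L j a : ℕ} (ha : a ∈ dyadicGrid L j) (haL : a < 2 ^ L) :
    a + gridStep j a ∈ dyadicGrid L j := by
  obtain ⟨ha₁, -, hd⟩ := mem_dyadicGrid.1 ha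
  have hle := add_gridStep_le_pow_succ_log hd
  have hlog : Nat.log 2 a < L := Nat.log_lt_of_lt_pow (by omega) haL
  refine mem_dyadicGrid.2 ⟨by omega, hle.trans (Nat.pow_le_pow_right two_pos hlog), ?_⟩
  exact gridStep_dvd_of_mem_Icc (le_add_right (Nat.pow_log_le_self 2 (by omega))) hle
    (dvd_add hd dvd_rfl)

lemma add_gridStep_le {L j a y : ℕ} (ha : a ∈ dyadicGrid L j) (hy : y ∈ dyadicGrid L j)
    (hay : a < y) : a + gridStep j a ≤ y := by
  obtain ⟨ha₁, -, hda⟩ := mem_dyadicGrid.1 ha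
  obtain ⟨-, -, hdy⟩ := mem_dyadicGrid.1 hy
  rcases lt_or_ge y (2 ^ (Nat.log 2 a + 1)) with hy' | hy'
  · have hlog : Nat.log 2 y = Nat.log 2 a :=
      Nat.log_eq_of_pow_le_of_lt_pow ((Nat.pow_log_le_self 2 (by omega)).trans hay.le) hy'
    rw [gridStep_eq_of_log_eq hlog] at hdy
    exact add_le_of_dvd_of_lt hda hdy hay
  · exact (add_gridStep_le_pow_succ_log hda).trans hy'

lemma consecutive_iff_eq_add_gridStep {L j a b : ℕ} (ha : a ∈ dyadicGrid L j)
    (hb : b ∈ dyadicGrid L j) :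
    (a < b ∧ ∀ x ∈ dyadicGrid L j, ¬(a < x ∧ x < b)) ↔ b = a + gridStep j a := by
  have hpos := gridStep_pos j a
  constructor
  · rintro ⟨hab, hcons⟩
    have haL : a < 2 ^ L := hab.trans_le (mem_dyadicGrid.1 hb).2.1
    have := hcons _ (add_gridStep_mem ha haL)
    have := add_gridStep_le ha hb hab
    omega
  · rintro rfl
    exact ⟨by omega, fun x hx ⟨hax, hxb⟩ => (add_gridStep_le ha hx hax).not_gt hxb⟩

lemma pow_log_le_roundDown (j : ℕ) {x : ℕ} (hx : x ≠ 0) : 2 ^ Nat.log 2 x ≤ roundDown j x := by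
  obtain ⟨q, hq⟩ := gridStep_dvd_pow_log j x
  rw [roundDown, hq]
  exact Nat.mul_le_mul_left _ ((Nat.le_div_iff_mul_le (gridStep_pos j x)).2
    (by rw [mul_comm, ← hq]; exact Nat.pow_log_le_self 2 hx))

lemma roundDown_le (j x : ℕ) : roundDown j x ≤ x := Nat.mul_div_le x _

lemma log_roundDown (j : ℕ) {x : ℕ} (hx : x ≠ 0) : Nat.log 2 (roundDown j x) = Nat.log 2 x :=
  Nat.log_eq_of_pow_le_of_lt_pow (pow_log_le_roundDown j hx)
    ((roundDown_le j x).trans_lt (Nat.lt_pow_succ_log_self one_lt_two x))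

lemma roundDown_mem {L j x : ℕ} (hx₁ : 1 ≤ x) (hx₂ : x ≤ 2 ^ L) :
    roundDown j x ∈ dyadicGrid L j := by
  have h := pow_log_le_roundDown j (x := x) (by omega)
  refine mem_dyadicGrid.2 ⟨Nat.one_le_two_pow.trans h, (roundDown_le j x).trans hx₂, ?_⟩
  rw [gridStep_eq_of_log_eq (log_roundDown j (by omega))]
  exact Dvd.intro _ rfl

lemma midpoint_mem_dyadicGrid_succ {L j a c : ℕ} (ha : a ∈ dyadicGrid L j)
    (hgap : 2 ≤ gridStep j a) (hmid : a + (a + gridStep j a) = 2 * c) (hc : c ≤ 2 ^ L) :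
    c ∈ dyadicGrid L (j + 1) := by
  obtain ⟨ha₁, -, hda⟩ := mem_dyadicGrid.1 ha
  have hj : j < Nat.log 2 a := by
    by_contra! h
    rw [gridStep_eq_one_of_log_le h] at hgap
    omega
  have hhalf : gridStep j a = 2 * 2 ^ (Nat.log 2 a - (j + 1)) := by
    rw [gridStep, ← pow_succ']; congr 1; omega
  have hdc : 2 ^ (Nat.log 2 a - (j + 1)) ∣ c := by
    have hca : c = a + 2 ^ (Nat.log 2 a - (j + 1)) := by omega
    rw [hca]
    exact dvd_add ((Dvd.intro_left 2 hhalf.symm).trans hda) dvd_rfl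
  refine mem_dyadicGrid.2 ⟨by omega, hc, gridStep_dvd_of_mem_Icc (i := Nat.log 2 a) ?_ ?_ hdc⟩
  · linarith [Nat.pow_log_le_self 2 (x := a) (by omega)]
  · linarith [add_gridStep_le_pow_succ_log hda]

lemma exists_midpoint_of_mem_dyadicGrid_succ {L j c : ℕ} (hc : c ∈ dyadicGrid L (j + 1))
    (hcj : c ∉ dyadicGrid L j) :
    ∃ a ∈ dyadicGrid L j, 2 ≤ gridStep j a ∧ a + (a + gridStep j a) = 2 * c := by
  obtain ⟨hc₁, hc₂, hdc⟩ := mem_dyadicGrid.1 hc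
  have hndc : ¬gridStep j c ∣ c := fun h => hcj (mem_dyadicGrid.2 ⟨hc₁, hc₂, h⟩)
  have hj : j < Nat.log 2 c := by
    by_contra! h
    exact hndc (gridStep_eq_one_of_log_le h ▸ one_dvd c)
  have hhalf : gridStep j c = gridStep (j + 1) c * 2 := by
    rw [gridStep, gridStep, ← pow_succ]; congr 1; omega
  have hmod : c % gridStep j c = gridStep (j + 1) c := by
    rw [hhalf] at hndc ⊢
    obtain ⟨m, hm⟩ := hdc
    generalize gridStep (j + 1) c = h at hm hndc ⊢
    subst hm
    have hm2 : m % 2 = 1 := by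
      by_contra hm2
      exact hndc (mul_dvd_mul_left h (Nat.dvd_of_mod_eq_zero (by omega)))
    rw [Nat.mul_mod_mul_left, hm2, mul_one]
  refine ⟨roundDown j c, roundDown_mem hc₁ hc₂, ?_, ?_⟩ <;>
    rw [gridStep_eq_of_log_eq (log_roundDown j (by omega))]
  · have := gridStep_pos (j + 1) c
    omega
  · have := Nat.div_add_mod c (gridStep j c)
    rw [roundDown]
    omega

theorem milestones_eq_dyadicGrid (L : ℕ) : ∀ j, milestones L j = dyadicGrid L j
  | 0 => milestones_zero_eq_dyadicGrid L
  | j + 1 => by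
    ext c
    rw [milestones, milestones_eq_dyadicGrid L j]
    simp only [Finset.mem_union, Finset.mem_filter, Finset.mem_range]
    constructor
    · rintro (hc | ⟨hc, a, ha, b, hb, hab, hcons, hgap, hmid⟩)
      · exact dyadicGrid_mono L j hc
      · obtain rfl := (consecutive_iff_eq_add_gridStep ha hb).1 ⟨hab, hcons⟩
        exact midpoint_mem_dyadicGrid_succ ha (by omega) hmid (by omega)
    · intro hc
      by_cases hcj : c ∈ dyadicGrid L j
      · exact Or.inl hcj
      obtain ⟨a, ha, hgap, hmid⟩ := exists_midpoint_of_mem_dyadicGrid_succ hc hcj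
      have hc₂ := (mem_dyadicGrid.1 hc).2.1
      have hb := add_gridStep_mem ha (by omega)
      obtain ⟨hab, hcons⟩ := (consecutive_iff_eq_add_gridStep ha hb).2 rfl
      exact Or.inr ⟨by omega, a, ha, _, hb, hab, hcons, by omega, hmid⟩

lemma exists_mem_dyadicGrid_ge_and_two_pow_mul_le {L j x : ℕ} (hx₁ : 1 ≤ x)
    (hx₂ : x ≤ 2 ^ L) :
    ∃ m ∈ dyadicGrid L j, x ≤ m ∧ 2 ^ j * m ≤ (2 ^ j + 1) * x := by
  by_cases hd : gridStep j x ∣ x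
  · exact ⟨x, mem_dyadicGrid.2 ⟨hx₁, hx₂, hd⟩, le_rfl, by nlinarith⟩
  have hj : j ≤ Nat.log 2 x := by
    by_contra! h
    exact hd (gridStep_eq_one_of_log_le h.le ▸ one_dvd x)
  have ha := roundDown_mem (j := j) hx₁ hx₂
  have hstep : gridStep j (roundDown j x) = gridStep j x :=
    gridStep_eq_of_log_eq (log_roundDown j (by omega))
  have hax : roundDown j x < x := by
    refine (roundDown_le j x).lt_of_ne fun h => hd ?_
    rw [← h]
    exact (mem_dyadicGrid.1 ha).2.2
  have hxs : x < roundDown j x + gridStep j x := by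
    simpa [roundDown, mul_add] using Nat.lt_mul_div_succ x (gridStep_pos j x)
  have hsx : 2 ^ j * gridStep j x ≤ x := by
    rw [gridStep, ← pow_add, Nat.add_sub_cancel' hj]
    exact Nat.pow_log_le_self 2 (by omega)
  refine ⟨_, add_gridStep_mem ha (by omega), by omega, ?_⟩
  rw [hstep]
  nlinarith

lemma two_pow_mul_le_of_forall_milestone_le {L k : ℕ} {x y : ℤ} (hx₁ : 1 ≤ x)
    (hx₂ : x ≤ 2 ^ L) (hy : ∀ m ∈ milestones L k, x ≤ (m : ℤ) → y ≤ m) :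
    2 ^ k * y ≤ (2 ^ k + 1) * x := by
  lift x to ℕ using by omega
  obtain ⟨m, hm, hxm, hbound⟩ := exists_mem_dyadicGrid_ge_and_two_pow_mul_le (j := k)
    (by exact_mod_cast hx₁) (by exact_mod_cast hx₂)
  rw [← milestones_eq_dyadicGrid] at hm
  have hym := hy m hm (by exact_mod_cast hxm)
  calc 2 ^ k * y ≤ 2 ^ k * (m : ℤ) := by gcongr
    _ ≤ (2 ^ k + 1) * x := by exact_mod_cast hbound

section treeWeight

variable {V : Type*} [Fintype V] {R : Type*} (T : SimpleGraph V)

lemma treeWeight_mono [AddCommMonoid R] [PartialOrder R] [IsOrderedAddMonoid R]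
    {f g : Sym2 V → R} (h : ∀ e ∈ T.edgeSet, f e ≤ g e) : treeWeight T f ≤ treeWeight T g := by
  let _ : Fintype T.edgeSet := Fintype.ofFinite _
  unfold treeWeight
  exact Finset.sum_le_sum fun e he => h e (Set.mem_toFinset.1 he)

lemma mul_treeWeight [NonUnitalNonAssocSemiring R] (c : R) (w : Sym2 V → R) :
    c * treeWeight T w = treeWeight T (fun e => c * w e) := by
  let _ : Fintype T.edgeSet := Fintype.ofFinite _
  unfold treeWeight
  exact Finset.mul_sum _ _ _

end treeWeight

theorem milestone_rounding_gives_approx_mst_general {V : Type*} [Fintype V]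
    (L k : ℕ)
    (G : SimpleGraph V) (w w' : Sym2 V → ℤ)
    (hw : ∀ e ∈ G.edgeSet, 1 ≤ w e ∧ w e ≤ 2 ^ L)
    (hw' : ∀ e ∈ G.edgeSet,
      (∃ m ∈ milestones L k, w' e = (m : ℤ)) ∧ w e ≤ w' e ∧
        ∀ x ∈ milestones L k, w e ≤ (x : ℤ) → w' e ≤ (x : ℤ))
    (T' : SimpleGraph V) (hT'G : T' ≤ G)
    (hmin' : ∀ S : SimpleGraph V, S ≤ G → S.IsTree → treeWeight T' w' ≤ treeWeight S w')
    (T : SimpleGraph V) (hTG : T ≤ G) (hT : T.IsTree) :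
    ((treeWeight T' w : ℤ) : ℝ) ≤ (1 + 1 / 2 ^ k) * ((treeWeight T w : ℤ) : ℝ) := by
  have hround : ∀ e ∈ G.edgeSet, 2 ^ k * w' e ≤ (2 ^ k + 1) * w e := fun e he =>
    two_pow_mul_le_of_forall_milestone_le (hw e he).1 (hw e he).2 (hw' e he).2.2
  have hbound : 2 ^ k * treeWeight T' w ≤ (2 ^ k + 1) * treeWeight T w :=
    calc 2 ^ k * treeWeight T' w
        ≤ 2 ^ k * treeWeight T' w' := by
          gcongr
          exact treeWeight_mono T' fun e he => (hw' e (SimpleGraph.edgeSet_mono hT'G he)).2.1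
      _ ≤ 2 ^ k * treeWeight T w' := by gcongr; exact hmin' T hTG hT
      _ ≤ (2 ^ k + 1) * treeWeight T w := by
          rw [mul_treeWeight, mul_treeWeight]
          exact treeWeight_mono T fun e he => hround e (SimpleGraph.edgeSet_mono hTG he)
  have hbound' : (2 : ℝ) ^ k * treeWeight T' w ≤ (2 ^ k + 1) * treeWeight T w := by
    exact_mod_cast hbound
  rw [one_add_div (by positivity), div_mul_eq_mul_div, le_div_iff₀ (by positivity)]
  linarith

/-- **MSTs for milestone-rounded weights are `(1 + 1/2^k)`-approximate MSTs.** Fix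
`L ≥ 2`, `n = 2 ^ L` and `0 ≤ k ≤ L − 1`. Let `G` be a finite connected simple graph with
integer edge weights `w` satisfying `1 ≤ w e ≤ n` on every edge, and let `w' e` be the
least element of the milestone set `M_k` that is `≥ w e`. Then every spanning tree `T'` of
`G` of minimum total weight with respect to `w'` has total `w`-weight at most
`(1 + 1 / 2 ^ k)` times the total `w`-weight of a minimum spanning tree `T` of `G` with
respect to `w`. -/
theorem milestone_rounding_gives_approx_mst {V : Type*} [Fintype V]
    (L k : ℕ) (hL : 2 ≤ L) (hk : k ≤ L - 1)
    (G : SimpleGraph V) (hG : G.Connected) (w w' : Sym2 V → ℤ)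
    (hw : ∀ e ∈ G.edgeSet, 1 ≤ w e ∧ w e ≤ 2 ^ L)
    (hw' : ∀ e ∈ G.edgeSet,
      (∃ m ∈ milestones L k, w' e = (m : ℤ)) ∧ w e ≤ w' e ∧
        ∀ x ∈ milestones L k, w e ≤ (x : ℤ) → w' e ≤ (x : ℤ))
    (T' : SimpleGraph V) (hT'G : T' ≤ G) (hT' : T'.IsTree)
    (hmin' : ∀ S : SimpleGraph V, S ≤ G → S.IsTree → treeWeight T' w' ≤ treeWeight S w')
    (T : SimpleGraph V) (hTG : T ≤ G) (hT : T.IsTree)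
    (hmin : ∀ S : SimpleGraph V, S ≤ G → S.IsTree → treeWeight T w ≤ treeWeight S w) :
    ((treeWeight T' w : ℤ) : ℝ) ≤ (1 + 1 / 2 ^ k) * ((treeWeight T w : ℤ) : ℝ) :=
  milestone_rounding_gives_approx_mst_general L k G w w' hw hw' T' hT'G hmin' T hTG hT
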